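/- Let g ∈ k[x₁,…,x_M] be a nonzero polynomial over a field k of characteristic 0. Then the quotient k[x₁,…,x_M]/Ann(g), where Ann(g) = {f : f(∂₁,…,∂_M)(g) = 0}, is a local Artinian Gorenstein algebra of socle degree deg(g). -/

import Mathlib

/-!
The formula `∂^d (c x^e) = c · e!/(e-d)! · x^(e-d)` shows that `f ↦ f ⋆ g` is a ring action, so
`Ann g` is an ideal. Monomials of degree `> deg g` kill `g`, so the image `m` of `(x₁,…,x_M)` in
`A = k[x]/Ann g` satisfies `m^(deg g + 1) = 0`; being the image of a maximal ideal and not the unit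
ideal, `m` is maximal, and being nilpotent it is the only maximal ideal, so the Noetherian ring `A`
is local Artinian. For a monomial `x^d` of top degree in `g`, `x^d ⋆ g` is a nonzero constant, so a
multiple `f₀` of `x^d` has `f₀ ⋆ g = 1`; hence `m^(deg g) ≠ 0`. If `[f]` lies in the socle, every
`∂ᵢ` kills `f ⋆ g`, which in characteristic zero forces `f ⋆ g = c` to be constant, and then
`[f] = c [f₀]`.
-/

open MvPolynomial

/-- The differential operator on polynomials given by a single monomial `x^d`, namely
`∂^d := ∏ᵢ (∂/∂xᵢ)^{dᵢ}`. -/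
noncomputable def applyMonomial (k : Type*) [Field k] {M : ℕ} (d : Fin M →₀ ℕ) :
    Module.End k (MvPolynomial (Fin M) k) :=
  ((List.finRange M).map (fun i =>
    ((MvPolynomial.pderiv i).toLinearMap : Module.End k (MvPolynomial (Fin M) k)) ^ (d i))).prod

/-- The apolarity action `f ⋆ g := f(∂/∂x₁, …, ∂/∂x_M)(g)`. -/
noncomputable def dstar (k : Type*) [Field k] {M : ℕ} (f g : MvPolynomial (Fin M) k) :
    MvPolynomial (Fin M) k :=
  ∑ d ∈ f.support, f.coeff d • applyMonomial k d g

section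

variable {σ R : Type*} [CommSemiring R]

theorem pderiv_pow_monomial (i : σ) (n : ℕ) (e : σ →₀ ℕ) (c : R) :
    ((pderiv i).toLinearMap ^ n : Module.End R (MvPolynomial σ R)) (monomial e c) =
      monomial (e - Finsupp.single i n) (c * (e i).descFactorial n) := by
  induction n with
  | zero => simp
  | succ n ih =>
    rw [pow_succ', Module.End.mul_apply, ih, Derivation.coeFn_coe, pderiv_monomial, tsub_tsub,
      ← Finsupp.single_add, Finsupp.tsub_apply, Finsupp.single_eq_same, Nat.descFactorial_succ]
    congr 1
    push_cast
    ring

theorem list_prod_pderiv_pow_monomial [DecidableEq σ] (l : List σ) (hl : l.Nodup)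
    (d e : σ →₀ ℕ) (c : R) :
    (l.map fun i => (pderiv i).toLinearMap ^ d i : List (Module.End R (MvPolynomial σ R))).prod
        (monomial e c) =
      monomial (e - ∑ i ∈ l.toFinset, Finsupp.single i (d i))
        (c * ∏ i ∈ l.toFinset, (e i).descFactorial (d i)) := by
  induction l with
  | nil => simp
  | cons i l ih =>
    obtain ⟨hi, hl⟩ := List.nodup_cons.mp hl
    have hi' : i ∉ l.toFinset := List.mem_toFinset.not.mpr hi
    have hsum : (∑ j ∈ l.toFinset, Finsupp.single j (d j)) i = 0 := by
      rw [Finsupp.finsetSum_apply]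
      exact Finset.sum_eq_zero fun j hj => Finsupp.single_eq_of_ne (by rintro rfl; exact hi' hj)
    rw [List.map_cons, List.prod_cons, Module.End.mul_apply, ih hl, pderiv_pow_monomial,
      List.toFinset_cons, Finset.sum_insert hi', Finset.prod_insert hi', tsub_tsub, add_comm,
      Finsupp.tsub_apply, hsum, Nat.sub_zero]
    congr 1
    push_cast
    ring

theorem eq_C_of_forall_pderiv_eq_zero [NoZeroDivisors R] [CharZero R] {p : MvPolynomial σ R}
    (h : ∀ i, pderiv i p = 0) : p = C (constantCoeff p) := by
  classical
  ext d
  rw [coeff_C]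
  split_ifs with hd
  · rw [← hd, constantCoeff_eq]
  · obtain ⟨i, hi⟩ : ∃ i, d i ≠ 0 := by
      by_contra! h0
      exact hd (Finsupp.ext h0).symm
    have := coeff_pderiv (i := i) p (d - Finsupp.single i 1)
    rw [h i, coeff_zero, tsub_add_cancel_of_le (Finsupp.single_le_iff.mpr (by omega))] at this
    exact (mul_eq_zero.mp this.symm).resolve_right (Nat.cast_add_one_ne_zero _)

theorem exists_mem_support_degree_eq_totalDegree {p : MvPolynomial σ R} (hp : p ≠ 0) :
    ∃ d ∈ p.support, d.degree = p.totalDegree := by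
  obtain ⟨d, hd, hsup⟩ := Finset.exists_mem_eq_sup _ (support_nonempty.mpr hp)
    fun d : σ →₀ ℕ => d.degree
  exact ⟨d, hd, hsup.symm⟩

end

theorem isMaximal_idealOfVars {σ K : Type*} [Field K] : (idealOfVars σ K).IsMaximal := by
  have hker : idealOfVars σ K = RingHom.ker constantCoeff := by
    ext f
    rw [← pow_one (idealOfVars σ K), mem_pow_idealOfVars_iff', RingHom.mem_ker, constantCoeff_eq]
    simp only [Nat.lt_one_iff, Finsupp.degree_eq_zero_iff, forall_eq]
  rw [hker]
  exact RingHom.ker_isMaximal_of_surjective _ fun c => ⟨C c, constantCoeff_C σ c⟩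

theorem IsLocalRing.of_isMaximal_of_pow_eq_bot {R : Type*} [CommRing R] {m : Ideal R}
    (hm : m.IsMaximal) {n : ℕ} (hn : m ^ n = ⊥) : IsLocalRing R :=
  .of_unique_max_ideal ⟨m, hm, fun _ hJ =>
    (hm.eq_of_le hJ.ne_top (hJ.isPrime.le_of_pow_le (hn ▸ bot_le))).symm⟩

section Apolarity

variable {k : Type*} [Field k] {M : ℕ}

local notation "P" => MvPolynomial (Fin M) k

theorem applyMonomial_monomial (d e : Fin M →₀ ℕ) (c : k) :
    applyMonomial k d (monomial e c) =
      monomial (e - d) (c * ∏ i, (e i).descFactorial (d i)) := by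
  rw [applyMonomial, list_prod_pderiv_pow_monomial _ (List.nodup_finRange M),
    List.toFinset_finRange, Finsupp.univ_sum_single]

theorem applyMonomial_add (d e : Fin M →₀ ℕ) :
    applyMonomial k (d + e) = applyMonomial k d * applyMonomial k e := by
  refine linearMap_ext fun f => LinearMap.ext_ring ?_
  rw [LinearMap.comp_apply, LinearMap.comp_apply, Module.End.mul_apply, applyMonomial_monomial,
    applyMonomial_monomial, applyMonomial_monomial, tsub_tsub, add_comm e, mul_assoc,
    ← Nat.cast_mul, ← Finset.prod_mul_distrib]
  congr 3
  refine Finset.prod_congr rfl fun i _ => ?_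
  rw [Finsupp.add_apply, Finsupp.tsub_apply, add_comm,
    ← Nat.descFactorial_mul_descFactorial (Nat.le_add_right (e i) (d i)),
    Nat.add_sub_cancel_left, mul_comm]

theorem applyMonomial_zero : applyMonomial k (0 : Fin M →₀ ℕ) = 1 := by
  refine linearMap_ext fun f => LinearMap.ext_ring ?_
  simp [applyMonomial_monomial]

theorem applyMonomial_single_one (i : Fin M) :
    applyMonomial k (Finsupp.single i 1) = (pderiv i).toLinearMap := by
  refine linearMap_ext fun e => LinearMap.ext_ring ?_
  rw [LinearMap.comp_apply, LinearMap.comp_apply, applyMonomial_monomial, Derivation.coeFn_coe,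
    pderiv_monomial, Finset.prod_eq_single i]
  · simp
  · intro j _ hj
    rw [Finsupp.single_eq_of_ne hj, Nat.descFactorial_zero]
  · simp

theorem dstar_eq_sum_of_support_subset {f : P} {s : Finset (Fin M →₀ ℕ)} (hs : f.support ⊆ s)
    (g : P) : dstar k f g = ∑ d ∈ s, f.coeff d • applyMonomial k d g :=
  Finset.sum_subset hs fun d _ hd => by rw [notMem_support_iff.mp hd, zero_smul]

theorem dstar_monomial (d : Fin M →₀ ℕ) (c : k) (g : P) :
    dstar k (monomial d c) g = c • applyMonomial k d g := by
  classical
  rw [dstar_eq_sum_of_support_subset support_monomial_subset, Finset.sum_singleton,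
    coeff_monomial, if_pos rfl]

theorem dstar_C (c : k) (g : P) : dstar k (C c) g = c • g := by
  rw [C_apply, dstar_monomial, applyMonomial_zero, Module.End.one_apply]

theorem dstar_X (i : Fin M) (g : P) : dstar k (X i) g = pderiv i g := by
  rw [X, dstar_monomial, one_smul, applyMonomial_single_one, Derivation.coeFn_coe]

theorem dstar_zero_right (f : P) : dstar k f 0 = 0 := by
  simp [dstar]

theorem dstar_add_left (f₁ f₂ g : P) : dstar k (f₁ + f₂) g = dstar k f₁ g + dstar k f₂ g := by
  classical
  rw [dstar_eq_sum_of_support_subset support_add,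
    dstar_eq_sum_of_support_subset Finset.subset_union_left,
    dstar_eq_sum_of_support_subset Finset.subset_union_right, ← Finset.sum_add_distrib]
  simp only [coeff_add, add_smul]

theorem dstar_sub_left (f₁ f₂ g : P) : dstar k (f₁ - f₂) g = dstar k f₁ g - dstar k f₂ g :=
  eq_sub_of_add_eq (by rw [← dstar_add_left, sub_add_cancel])

theorem dstar_mul (f₁ f₂ g : P) : dstar k (f₁ * f₂) g = dstar k f₁ (dstar k f₂ g) := by
  induction f₁ using MvPolynomial.induction_on' with
  | add p q hp hq => rw [add_mul, dstar_add_left, hp, hq, dstar_add_left]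
  | monomial d c =>
    induction f₂ using MvPolynomial.induction_on' with
    | add p q hp hq =>
      rw [mul_add, dstar_add_left, hp, hq, dstar_add_left, dstar_monomial, dstar_monomial,
        dstar_monomial, map_add, smul_add]
    | monomial e c' =>
      rw [monomial_mul, dstar_monomial, dstar_monomial, dstar_monomial, applyMonomial_add,
        Module.End.mul_apply, map_smul, smul_smul]

theorem dstar_smul_left (c : k) (f g : P) : dstar k (c • f) g = c • dstar k f g := by
  rw [smul_eq_C_mul, dstar_mul, dstar_C]

variable (k) in
def annIdeal (g : P) : Ideal P where
  carrier := {f | dstar k f g = 0}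
  zero_mem' := by simp [dstar]
  add_mem' {f₁ f₂} (h₁ : dstar k f₁ g = 0) (h₂ : dstar k f₂ g = 0) :=
    show dstar k (f₁ + f₂) g = 0 by rw [dstar_add_left, h₁, h₂, add_zero]
  smul_mem' p f (hf : dstar k f g = 0) :=
    show dstar k (p * f) g = 0 by rw [dstar_mul, hf, dstar_zero_right]

theorem mem_annIdeal {f g : P} : f ∈ annIdeal k g ↔ dstar k f g = 0 := Iff.rfl

theorem applyMonomial_monomial_of_not_le {d e : Fin M →₀ ℕ} (h : ¬d ≤ e) (c : k) :
    applyMonomial k d (monomial e c) = 0 := by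
  obtain ⟨i, hi⟩ : ∃ i, e i < d i := by simpa [Finsupp.le_def] using h
  rw [applyMonomial_monomial, Finset.prod_eq_zero (Finset.mem_univ i)
    (Nat.descFactorial_eq_zero_iff_lt.mpr hi), Nat.cast_zero, mul_zero, monomial_zero]

theorem applyMonomial_eq_zero_of_totalDegree_lt {d : Fin M →₀ ℕ} {p : P}
    (h : p.totalDegree < d.degree) : applyMonomial k d p = 0 := by
  conv_lhs => rw [p.as_sum, map_sum]
  refine Finset.sum_eq_zero fun e he => applyMonomial_monomial_of_not_le (fun hde => ?_) _
  exact (le_totalDegree he).not_gt (h.trans_le (Finsupp.degree_mono hde))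

theorem constantCoeff_applyMonomial (d : Fin M →₀ ℕ) (p : P) :
    constantCoeff (applyMonomial k d p) = p.coeff d * ∏ i, ((d i).factorial : k) := by
  conv_lhs => rw [p.as_sum, map_sum, map_sum]
  rw [Finset.sum_eq_single d]
  · simp only [applyMonomial_monomial, tsub_self, constantCoeff_monomial, if_pos,
      Nat.descFactorial_self, Nat.cast_prod]
  · intro e _ hne
    by_cases hde : d ≤ e
    · rw [applyMonomial_monomial, constantCoeff_monomial, if_neg]
      exact fun h => hne (le_antisymm (tsub_eq_zero_iff_le.mp h) hde)
    · rw [applyMonomial_monomial_of_not_le hde, map_zero]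
  · intro hd
    rw [notMem_support_iff.mp hd, monomial_zero, map_zero, map_zero]

theorem dstar_eq_zero_of_mem_pow_idealOfVars {n : ℕ} {f g : P}
    (hf : f ∈ idealOfVars (Fin M) k ^ n) (hg : g.totalDegree < n) : dstar k f g = 0 :=
  Finset.sum_eq_zero fun d hd => by
    rw [applyMonomial_eq_zero_of_totalDegree_lt
      (hg.trans_le ((mem_pow_idealOfVars_iff n f).mp hf d hd)), smul_zero]

theorem pow_idealOfVars_le_annIdeal (g : P) :
    idealOfVars (Fin M) k ^ (g.totalDegree + 1) ≤ annIdeal k g :=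
  fun _ hf => dstar_eq_zero_of_mem_pow_idealOfVars hf (Nat.lt_succ_self _)

theorem applyMonomial_eq_C_of_degree_eq_totalDegree [CharZero k] {d : Fin M →₀ ℕ} {p : P}
    (hd : d.degree = p.totalDegree) :
    applyMonomial k d p = C (p.coeff d * ∏ i, ((d i).factorial : k)) := by
  refine (eq_C_of_forall_pderiv_eq_zero fun i => ?_).trans
    (congrArg C (constantCoeff_applyMonomial d p))
  rw [← Derivation.coeFn_coe, ← applyMonomial_single_one, ← Module.End.mul_apply,
    ← applyMonomial_add, applyMonomial_eq_zero_of_totalDegree_lt]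
  rw [map_add, Finsupp.degree_single, hd]
  exact Nat.lt_one_add_iff.mpr le_rfl

theorem exists_dstar_eq_one [CharZero k] {g : P} (hg : g ≠ 0) :
    ∃ f ∈ idealOfVars (Fin M) k ^ g.totalDegree, dstar k f g = 1 := by
  obtain ⟨d, hd, hdeg⟩ := exists_mem_support_degree_eq_totalDegree hg
  have hc : g.coeff d * ∏ i, ((d i).factorial : k) ≠ 0 :=
    mul_ne_zero (mem_support_iff.mp hd)
      (Finset.prod_ne_zero_iff.mpr fun i _ => Nat.cast_ne_zero.mpr (Nat.factorial_ne_zero _))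
  refine ⟨monomial d (g.coeff d * ∏ i, ((d i).factorial : k))⁻¹,
    (monomial_mem_pow_idealOfVars_iff _ _ (inv_ne_zero hc)).mpr hdeg.ge, ?_⟩
  rw [dstar_monomial, applyMonomial_eq_C_of_degree_eq_totalDegree hdeg, smul_eq_C_mul, ← C_mul,
    inv_mul_cancel₀ hc, C_1]

theorem colon_map_idealOfVars_eq_span [CharZero k] {f₀ g : P} (hf₀ : dstar k f₀ g = 1) :
    ((⊥ : Ideal (P ⧸ annIdeal k g)).colon
        (((idealOfVars (Fin M) k).map (Ideal.Quotient.mk _) : Ideal (P ⧸ annIdeal k g)) :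
          Set (P ⧸ annIdeal k g))).restrictScalars k =
      Submodule.span k {Ideal.Quotient.mk _ f₀} := by
  apply le_antisymm
  · intro q hq
    rw [Submodule.restrictScalars_mem, Submodule.mem_colon] at hq
    obtain ⟨f, rfl⟩ := Ideal.Quotient.mk_surjective q
    have hconst : dstar k f g = C (constantCoeff (dstar k f g)) :=
      eq_C_of_forall_pderiv_eq_zero fun i => by
        have := hq _ (Ideal.mem_map_of_mem _ (Ideal.subset_span ⟨i, rfl⟩))
        rwa [smul_eq_mul, mul_comm, ← map_mul, Submodule.mem_bot, Ideal.Quotient.eq_zero_iff_mem,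
          mem_annIdeal, dstar_mul, dstar_X] at this
    refine Submodule.mem_span_singleton.mpr ⟨constantCoeff (dstar k f g), ?_⟩
    rw [← Ideal.Quotient.mkₐ_eq_mk k, ← map_smul, Ideal.Quotient.mkₐ_eq_mk, Ideal.Quotient.eq,
      mem_annIdeal, dstar_sub_left, dstar_smul_left, hf₀, smul_eq_C_mul, mul_one, ← hconst,
      sub_self]
  · rw [Submodule.span_le, Set.singleton_subset_iff, SetLike.mem_coe,
      Submodule.restrictScalars_mem, Submodule.mem_colon]
    intro p hp
    obtain ⟨h, hh, rfl⟩ := (Ideal.mem_map_iff_of_surjective _ Ideal.Quotient.mk_surjective).mp hp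
    rw [smul_eq_mul, mul_comm, ← map_mul, Submodule.mem_bot, Ideal.Quotient.eq_zero_iff_mem,
      mem_annIdeal, dstar_mul, hf₀]
    exact dstar_eq_zero_of_mem_pow_idealOfVars (n := 1) (by rwa [pow_one])
      (by rw [totalDegree_one]; exact one_pos)

end Apolarity

/-- Let `g ∈ k[x₁,…,x_M]` be a nonzero polynomial over a field `k` of
characteristic `0`. Then `k[x₁,…,x_M]/Ann(g)`, where
`Ann(g) = {f : f(∂₁,…,∂_M)(g) = 0}`, is a local Artinian Gorenstein algebra of socle
degree `deg g`: its maximal ideal is the image of `(x₁,…,x_M)`, the `(deg g + 1)`-st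
power of the maximal ideal vanishes but not the `deg g`-th, and the socle (annihilator
of the maximal ideal) is a 1-dimensional `k`-vector space. -/
theorem stmt19 (k : Type*) [Field k] [CharZero k] (M : ℕ)
    (g : MvPolynomial (Fin M) k) (hg : g ≠ 0) :
    ∃ I : Ideal (MvPolynomial (Fin M) k),
      (∀ f : MvPolynomial (Fin M) k, f ∈ I ↔ dstar k f g = 0) ∧
      IsLocalRing (MvPolynomial (Fin M) k ⧸ I) ∧
      IsArtinianRing (MvPolynomial (Fin M) k ⧸ I) ∧
      ∀ m : Ideal (MvPolynomial (Fin M) k ⧸ I),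
        m = Ideal.map (Ideal.Quotient.mk I) (Ideal.span (Set.range X)) →
        (m.IsMaximal ∧
         m ^ (g.totalDegree + 1) = ⊥ ∧
         m ^ g.totalDegree ≠ ⊥ ∧
         Module.finrank k ((Submodule.colon (⊥ : Ideal (MvPolynomial (Fin M) k ⧸ I)) (m : Set (MvPolynomial (Fin M) k ⧸ I))).restrictScalars k) = 1) := by
  obtain ⟨f₀, hf₀_mem, hf₀⟩ := exists_dstar_eq_one hg
  set m := (idealOfVars (Fin M) k).map (Ideal.Quotient.mk (annIdeal k g))
  have hf₀_ne : Ideal.Quotient.mk (annIdeal k g) f₀ ≠ 0 := by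
    rw [Ne, Ideal.Quotient.eq_zero_iff_mem, mem_annIdeal, hf₀]
    exact one_ne_zero
  have hpow : m ^ (g.totalDegree + 1) = ⊥ := by
    rw [← Ideal.map_pow, Ideal.map_eq_bot_iff_le_ker, Ideal.mk_ker]
    exact pow_idealOfVars_le_annIdeal g
  have hpow_ne : m ^ g.totalDegree ≠ ⊥ := fun h => hf₀_ne <| by
    rw [← Ideal.mem_bot, ← h, ← Ideal.map_pow]
    exact Ideal.mem_map_of_mem _ hf₀_mem
  have hmax : m.IsMaximal :=
    (Ideal.map_eq_top_or_isMaximal_of_surjective _ Ideal.Quotient.mk_surjective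
      isMaximal_idealOfVars).resolve_left fun htop : m = ⊤ => hpow_ne <| by
        rw [htop, Ideal.top_pow, ← Ideal.top_pow _ (g.totalDegree + 1), ← htop, hpow]
  have hlocal := IsLocalRing.of_isMaximal_of_pow_eq_bot hmax hpow
  refine ⟨annIdeal k g, fun _ => Iff.rfl, hlocal, ?_, fun m' hm' => ?_⟩
  · rw [isArtinianRing_iff_isNilpotent_maximalIdeal, ← IsLocalRing.eq_maximalIdeal hmax]
    exact ⟨_, hpow⟩
  · subst hm'
    exact ⟨hmax, hpow, hpow_ne, by
      rw [colon_map_idealOfVars_eq_span hf₀, finrank_span_singleton hf₀_ne]⟩
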